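/- Let S be a Clifford semigroup and s an idempotent-invariant solution on S with kernel K. Then for every a ∈ S and every e ∈ E(S), a⁻¹·θ_e(a) ∈ K; and for all a,b ∈ S and every e ∈ E(S), if a·b⁻¹ ∈ K then θ_e(a) = θ_e(b). -/

import Mathlib

/-!
Idempotents are invisible to an idempotent-invariant solution: they can be absorbed into either
argument of `θ`, all `θ e` with `e` idempotent coincide, and `θ e ∘ θ u = θ e`, `θ u ∘ θ e = θ u`.
The first claim follows since then `θ g (a⁻¹ * θ e a) = θ g (a⁻¹ * a)`, which is idempotent.
For the second, with `k = a * b⁻¹` the element `θ e k` is idempotent because `θ e = θ g` for the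
idempotent `g = e * k * k⁻¹ ≤ k`; and `θ e a = θ e (k * b) = θ e k * θ k b`, so applying `θ e`
once more absorbs `θ e k` and leaves `θ e (θ k b) = θ e b`.
-/

/- The order `e ≤ a` on idempotents is encoded as `e = e * a * inv a`. -/
def InKernel {S : Type*} [Semigroup S] (inv : S → S) (θ : S → S → S) (a : S) : Prop :=
  ∀ e : S, e * e = e → e = e * a * inv a → θ e a * θ e a = θ e a

section

variable {S : Type*} [Semigroup S]

structure IsPentagonSolution (θ : S → S → S) : Prop where
  mul_eq : ∀ a b c : S, θ a b * θ (a * b) c = θ a (b * c)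
  comp_eq : ∀ a b c : S, θ (θ a b) (θ (a * b) c) = θ b c

def IsIdempotentInvariant (θ : S → S → S) : Prop :=
  ∀ a e f : S, IsIdempotentElem e → IsIdempotentElem f → θ a e = θ a f

section Regular

variable {inv : S → S} (hinv : ∀ a : S, a * inv a * a = a)
include hinv

theorem isIdempotentElem_inv_mul (a : S) : IsIdempotentElem (inv a * a) := by
  rw [IsIdempotentElem, mul_assoc, ← mul_assoc a, hinv]

theorem isIdempotentElem_mul_inv (a : S) : IsIdempotentElem (a * inv a) := by
  rw [IsIdempotentElem, ← mul_assoc, hinv]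

end Regular

namespace IsPentagonSolution

variable {inv : S → S} {θ : S → S → S} (hθ : IsPentagonSolution θ) (hE : IsIdempotentInvariant θ)
  (hinv : ∀ a : S, a * inv a * a = a)
include hθ hE hinv

theorem apply_mul_idempotent (u b : S) {f : S} (hf : IsIdempotentElem f) :
    θ u (b * f) = θ u b := by
  rw [← hθ.mul_eq, hE _ _ _ hf (isIdempotentElem_inv_mul hinv b), hθ.mul_eq, ← mul_assoc, hinv]

variable (hcentral : ∀ e : S, IsIdempotentElem e → ∀ a : S, Commute e a)
include hcentral

theorem apply_idempotent_mul (u b : S) {f : S} (hf : IsIdempotentElem f) :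
    θ u (f * b) = θ u b := by
  rw [(hcentral f hf b).eq, hθ.apply_mul_idempotent hE hinv u b hf]

theorem idempotent_mul_eq {e : S} (he : IsIdempotentElem e) (a : S) : θ (e * a) = θ a := by
  funext c
  have hea : θ e (e * a) = θ e a := hθ.apply_idempotent_mul hE hinv hcentral e a he
  have h := hθ.comp_eq e (e * a) c
  rw [← mul_assoc, he.eq, hea] at h
  rw [← h, hθ.comp_eq]

theorem mul_idempotent_eq {e : S} (he : IsIdempotentElem e) (a : S) : θ (a * e) = θ a := by
  rw [← (hcentral e he a).eq, hθ.idempotent_mul_eq hE hinv hcentral he]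

theorem apply_idempotent_mul_apply (u c : S) {e : S} (he : IsIdempotentElem e) :
    θ u e * θ u c = θ u c := by
  have h := hθ.mul_eq u e c
  rwa [hθ.mul_idempotent_eq hE hinv hcentral he,
    hθ.apply_idempotent_mul hE hinv hcentral u c he] at h

theorem isIdempotentElem_apply (u : S) {e : S} (he : IsIdempotentElem e) :
    IsIdempotentElem (θ u e) :=
  hθ.apply_idempotent_mul_apply hE hinv hcentral u e he

theorem apply_eq_apply_apply (u c : S) {e : S} (he : IsIdempotentElem e) :
    θ e c = θ (θ u e) (θ u c) := by
  rw [← hθ.comp_eq u e c, hθ.mul_idempotent_eq hE hinv hcentral he]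

theorem eq_of_isIdempotentElem {e f : S} (he : IsIdempotentElem e) (hf : IsIdempotentElem f) :
    θ e = θ f := by
  funext c
  rw [hθ.apply_eq_apply_apply hE hinv hcentral e c he,
    hθ.apply_eq_apply_apply hE hinv hcentral e c hf, hE e e f he hf]

theorem idempotent_apply_apply {e : S} (he : IsIdempotentElem e) (u c : S) :
    θ e (θ u c) = θ e c := by
  rw [hθ.apply_eq_apply_apply hE hinv hcentral u c he,
    hθ.eq_of_isIdempotentElem hE hinv hcentral (hθ.isIdempotentElem_apply hE hinv hcentral u he) he]

theorem apply_idempotent_apply (b : S) {e : S} (he : IsIdempotentElem e) (x : S) :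
    θ b (θ e x) = θ b x := by
  have hb := isIdempotentElem_inv_mul hinv b
  rw [← hθ.comp_eq (inv b) b, ← hθ.comp_eq (inv b) b,
    hθ.eq_of_isIdempotentElem hE hinv hcentral he hb,
    hθ.idempotent_apply_apply hE hinv hcentral hb]

theorem apply_mul_idempotent_apply (u b : S) {e : S} (he : IsIdempotentElem e) (a : S) :
    θ u (b * θ e a) = θ u (b * a) := by
  rw [← hθ.mul_eq, ← hθ.mul_eq, hθ.apply_idempotent_apply hE hinv hcentral _ he]

theorem inKernel_inv_mul_apply (a : S) {e : S} (he : IsIdempotentElem e) :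
    InKernel inv θ (inv a * θ e a) := fun g _ _ => by
  rw [hθ.apply_mul_idempotent_apply hE hinv hcentral g (inv a) he a]
  exact hθ.isIdempotentElem_apply hE hinv hcentral g (isIdempotentElem_inv_mul hinv a)

theorem isIdempotentElem_apply_of_inKernel {k : S} (hk : InKernel inv θ k) {e : S}
    (he : IsIdempotentElem e) : IsIdempotentElem (θ e k) := by
  have hkk := isIdempotentElem_mul_inv hinv k
  have hg : IsIdempotentElem (e * (k * inv k)) := he.mul_of_commute (hcentral e he _) hkk
  have hgk : e * (k * inv k) = e * (k * inv k) * k * inv k := by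
    rw [mul_assoc _ k, mul_assoc e, hkk.eq]
  have := hk _ hg hgk
  rwa [hθ.idempotent_mul_eq hE hinv hcentral he,
    hθ.eq_of_isIdempotentElem hE hinv hcentral hkk he] at this

theorem apply_eq_of_inKernel_mul_inv {a b : S} (hab : InKernel inv θ (a * inv b)) {e : S}
    (he : IsIdempotentElem e) : θ e a = θ e b := by
  have hsplit : θ e a = θ e (a * inv b) * θ (a * inv b) b := by
    rw [← hθ.apply_mul_idempotent hE hinv e a (isIdempotentElem_inv_mul hinv b), ← mul_assoc,
      ← hθ.mul_eq, hθ.idempotent_mul_eq hE hinv hcentral he]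
  calc θ e a = θ e (θ e a) := (hθ.idempotent_apply_apply hE hinv hcentral he e a).symm
    _ = θ e (θ (a * inv b) b) := by
      rw [hsplit, hθ.apply_idempotent_mul hE hinv hcentral _ _
        (hθ.isIdempotentElem_apply_of_inKernel hE hinv hcentral hab he)]
    _ = θ e b := hθ.idempotent_apply_apply hE hinv hcentral he _ b

end IsPentagonSolution

end

theorem pentagon_clifford_idempotent_invariant_kernel_representatives_general
    {S : Type*} [Semigroup S] (inv : S → S)
    (hinv1 : ∀ a : S, a * inv a * a = a)
    (hcentral : ∀ e : S, e * e = e → ∀ a : S, e * a = a * e)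
    (θ : S → S → S)
    (P1 : ∀ a b c : S, θ a b * θ (a * b) c = θ a (b * c))
    (P2 : ∀ a b c : S, θ (θ a b) (θ (a * b) c) = θ b c)
    (hEinv : ∀ a e f : S, e * e = e → f * f = f → θ a e = θ a f) :
    (∀ a e : S, e * e = e → InKernel inv θ (inv a * θ e a)) ∧
    (∀ a b e : S, e * e = e → InKernel inv θ (a * inv b) → θ e a = θ e b) := by
  have hθ : IsPentagonSolution θ := ⟨P1, P2⟩
  exact ⟨fun a e he => hθ.inKernel_inv_mul_apply hEinv hinv1 hcentral a he,
    fun a b e he hab => hθ.apply_eq_of_inKernel_mul_inv hEinv hinv1 hcentral hab he⟩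

theorem pentagon_clifford_idempotent_invariant_kernel_representatives
    {S : Type*} [Semigroup S] (inv : S → S)
    (hinv1 : ∀ a : S, a * inv a * a = a)
    (hinv2 : ∀ a : S, inv a * a * inv a = inv a)
    (hinvcomm : ∀ a : S, a * inv a = inv a * a)
    (hcentral : ∀ e : S, e * e = e → ∀ a : S, e * a = a * e)
    (θ : S → S → S)
    (P1 : ∀ a b c : S, θ a b * θ (a * b) c = θ a (b * c))
    (P2 : ∀ a b c : S, θ (θ a b) (θ (a * b) c) = θ b c)
    (hEinv : ∀ a e f : S, e * e = e → f * f = f → θ a e = θ a f) :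
    (∀ a e : S, e * e = e → InKernel inv θ (inv a * θ e a)) ∧
    (∀ a b e : S, e * e = e → InKernel inv θ (a * inv b) → θ e a = θ e b) :=
  pentagon_clifford_idempotent_invariant_kernel_representatives_general inv hinv1 hcentral θ P1 P2
    hEinv
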